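/- arXiv:2102.07374 — 2 statements merged into one kernel-verified Lean document; each statement's English description precedes it below -/
import Mathlib

section
/- For width 2n, the match expression ⊓_{i=1}^{n} (⊤_{i-1} 0 ⊤_{n-1} 0 ⊤_{n-i} + ⊤_{i-1} 1 ⊤_{n-1} 1 ⊤_{n-i}) captures exactly the set { b b | b ∈ 2ⁿ } of binary strings of length 2n consisting of a block of length n repeated twice. -/
/-- Match expressions, indexed by their width. -/
inductive MExp : ℕ → Type
  | eps : MExp 0
  | bot {n : ℕ} : MExp n
  | b0 : MExp 1
  | b1 : MExp 1
  | wx : MExp 1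
  | cat {m k : ℕ} : MExp m → MExp k → MExp (m + k)
  | plus {n : ℕ} : MExp n → MExp n → MExp n
  | inter {n : ℕ} : MExp n → MExp n → MExp n
  | compl {n : ℕ} : MExp n → MExp n

/-- Interpretation of a match expression of width `n` as a set of
binary strings of length `n` (represented as lists of booleans). -/
def msem : {n : ℕ} → MExp n → Set (List Bool)
  | _, .eps => {[]}
  | _, .bot => ∅
  | _, .b0 => {[false]}
  | _, .b1 => {[true]}
  | _, .wx => {[false], [true]}
  | _, .cat e e' => {s | ∃ x ∈ msem e, ∃ y ∈ msem e', s = x ++ y}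
  | _, .plus e e' => msem e ∪ msem e'
  | _, .inter e e' => msem e ∩ msem e'
  | n, .compl e => {s : List Bool | s.length = n} \ msem e

/-- `⊤ₙ`: the concatenation of `n` wildcards (`⊤₀ = •`). -/
def mtop : (n : ℕ) → MExp n
  | 0 => .eps
  | n + 1 => .cat (mtop n) .wx

/-- Cast a match expression along an equality of widths. -/
def MExp.cast {m n : ℕ} (h : m = n) (e : MExp m) : MExp n := h ▸ e

/-- The `i`-th conjunct `⊤_{i-1} 0 ⊤_{n-1} 0 ⊤_{n-i} + ⊤_{i-1} 1 ⊤_{n-1} 1 ⊤_{n-i}`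
(here `i : Fin n` is the 0-based index of the paper's `i`). -/
def dupTerm (n : ℕ) (i : Fin n) : MExp (2 * n) :=
  MExp.cast (by omega)
    (.plus
      (.cat (mtop i) (.cat .b0 (.cat (mtop (n - 1)) (.cat .b0 (mtop (n - 1 - i))))))
      (.cat (mtop i) (.cat .b1 (.cat (mtop (n - 1)) (.cat .b1 (mtop (n - 1 - i)))))))

/-- The intersection `⊓_{i=1}^{n}` of the above conjuncts. -/
def dupExpr (n : ℕ) : MExp (2 * n) :=
  (List.finRange n).foldr (fun i acc => .inter (dupTerm n i) acc) (mtop (2 * n))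

lemma msem_cast {m n : ℕ} (h : m = n) (e : MExp m) : msem (e.cast h) = msem e := by
  subst h; rfl

lemma msem_mtop (n : ℕ) : msem (mtop n) = {s : List Bool | s.length = n} := by
  induction n with
  | zero =>
    ext s; simp [mtop, msem, List.length_eq_zero_iff]
  | succ n ih =>
    ext s
    simp only [mtop, msem, ih, Set.mem_setOf_eq]
    constructor
    · rintro ⟨x, hx, y, hy, rfl⟩
      rcases hy with hy | hy <;> simp_all
    · intro hs
      have hne : s ≠ [] := by intro h; simp [h] at hs
      refine ⟨s.dropLast, ?_, [s.getLast hne], ?_, ?_⟩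
      · simp [List.length_dropLast, hs]
      · cases s.getLast hne <;> simp [Set.mem_insert_iff]
      · simp [List.dropLast_append_getLast hne]

lemma decomp_iff {n i : ℕ} (hi : i < n) (s : List Bool) (c : Bool) :
    (∃ x y z : List Bool, x.length = i ∧ y.length = n-1 ∧ z.length = n-1-i ∧
      s = x ++ c :: (y ++ c :: z)) ↔
    s.length = 2*n ∧ s[i]? = some c ∧ s[n+i]? = some c := by
  constructor
  · rintro ⟨x, y, z, hx, hy, hz, rfl⟩
    refine ⟨by simp; omega, ?_, ?_⟩
    · rw [List.getElem?_append_right (by omega)]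
      simp [hx]
    · have : x ++ c :: (y ++ c :: z) = (x ++ c :: y) ++ c :: z := by
        simp
      rw [this, List.getElem?_append_right (by simp; omega)]
      have h0 : n + i - (x ++ c :: y).length = 0 := by simp [hx, hy]; omega
      simp only [List.length_append, List.length_cons] at h0
      simp [h0]
  · rintro ⟨hlen, h1, h2⟩
    have hi' : i < s.length := by omega
    have hni : n + i < s.length := by omega
    refine ⟨s.take i, (s.drop (i+1)).take (n-1), s.drop (n+i+1), ?_, ?_, ?_, ?_⟩
    · simp; omega
    · simp; omega
    · simp; omega
    · have e1 : s = s.take i ++ s.drop i := (List.take_append_drop i s).symm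
      have e2 : s.drop i = s[i] :: s.drop (i+1) := List.drop_eq_getElem_cons hi'
      have e3 : s.drop (i+1) = (s.drop (i+1)).take (n-1) ++ (s.drop (i+1)).drop (n-1) :=
        (List.take_append_drop _ _).symm
      have e4 : (s.drop (i+1)).drop (n-1) = s.drop (n+i) := by
        rw [List.drop_drop]; congr 1; omega
      have e5 : s.drop (n+i) = s[n+i] :: s.drop (n+i+1) := List.drop_eq_getElem_cons hni
      have hc1 : s[i] = c := by
        have := List.getElem?_eq_getElem hi'
        rw [this] at h1; exact Option.some.inj h1
      have hc2 : s[n+i] = c := by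
        have := List.getElem?_eq_getElem hni
        rw [this] at h2; exact Option.some.inj h2
      conv_lhs => rw [e1, e2, e3, e4, e5, hc1, hc2]

lemma mem_dupTerm (n : ℕ) (i : Fin n) (s : List Bool) :
    s ∈ msem (dupTerm n i) ↔ s.length = 2*n ∧ s[(i:ℕ)]? = s[n + (i:ℕ)]? := by
  rw [dupTerm, msem_cast]
  simp only [msem, msem_mtop, Set.mem_union, Set.mem_setOf_eq, Set.mem_singleton_iff]
  have key : ∀ c : Bool,
      ((∃ x, x.length = (i:ℕ) ∧ ∃ y, (∃ x_1, x_1 = [c] ∧ ∃ y_1,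
        (∃ x_2, x_2.length = n-1 ∧ ∃ y_2, (∃ x_3, x_3 = [c] ∧ ∃ y_3, y_3.length = n-1-(i:ℕ) ∧ y_2 = x_3 ++ y_3) ∧ y_1 = x_2 ++ y_2) ∧ y = x_1 ++ y_1) ∧ s = x ++ y)) ↔
      (∃ x y z : List Bool, x.length = (i:ℕ) ∧ y.length = n-1 ∧ z.length = n-1-(i:ℕ) ∧ s = x ++ c :: (y ++ c :: z)) := by
    intro c
    constructor
    · rintro ⟨x, hx, _, ⟨_, rfl, _, ⟨y, hy, _, ⟨_, rfl, z, hz, rfl⟩, rfl⟩, rfl⟩, rfl⟩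
      exact ⟨x, y, z, hx, hy, hz, by simp⟩
    · rintro ⟨x, y, z, hx, hy, hz, rfl⟩
      exact ⟨x, hx, _, ⟨_, rfl, _, ⟨y, hy, _, ⟨_, rfl, z, hz, rfl⟩, rfl⟩, rfl⟩, by simp⟩
  rw [key false, key true, decomp_iff i.isLt s false, decomp_iff i.isLt s true]
  constructor
  · rintro (⟨h, h1, h2⟩ | ⟨h, h1, h2⟩) <;> exact ⟨h, by rw [h1, h2]⟩
  · rintro ⟨h, hq⟩
    have hi' : (i:ℕ) < s.length := by have := i.isLt; omega
    cases hc : s[(i:ℕ)] with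
    | false =>
      left
      refine ⟨h, ?_, ?_⟩
      · rw [List.getElem?_eq_getElem hi', hc]
      · rw [← hq, List.getElem?_eq_getElem hi', hc]
    | true =>
      right
      refine ⟨h, ?_, ?_⟩
      · rw [List.getElem?_eq_getElem hi', hc]
      · rw [← hq, List.getElem?_eq_getElem hi', hc]

lemma mem_foldr (n : ℕ) (l : List (Fin n)) (s : List Bool) :
    s ∈ msem (l.foldr (fun i acc => .inter (dupTerm n i) acc) (mtop (2 * n))) ↔
      s.length = 2 * n ∧ ∀ i ∈ l, s[(i:ℕ)]? = s[n + (i:ℕ)]? := by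
  induction l with
  | nil => simp [msem_mtop]
  | cons a l ih =>
    simp only [List.foldr_cons, msem, Set.mem_inter_iff, ih, mem_dupTerm, List.mem_cons]
    constructor
    · rintro ⟨⟨h1, h2⟩, _, h3⟩
      exact ⟨h1, fun i hi => by rcases hi with rfl | hi; exact h2; exact h3 i hi⟩
    · rintro ⟨h1, h2⟩
      exact ⟨⟨h1, h2 a (Or.inl rfl)⟩, h1, fun i hi => h2 i (Or.inr hi)⟩

/-- The expression `⊓ᵢ (⊤_{i-1} 0 ⊤_{n-1} 0 ⊤_{n-i} + ⊤_{i-1} 1 ⊤_{n-1} 1 ⊤_{n-i})`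
captures exactly the set `{ b b | b ∈ 2ⁿ }`. -/
theorem dupExpr_captures (n : ℕ) :
    msem (dupExpr n) = {s : List Bool | ∃ b : List Bool, b.length = n ∧ s = b ++ b} := by
  ext s
  rw [dupExpr, Set.mem_setOf_eq, mem_foldr]
  constructor
  · rintro ⟨hlen, hq⟩
    refine ⟨s.take n, by simp; omega, ?_⟩
    apply List.ext_getElem?
    intro j
    rcases lt_or_ge j n with hj | hj
    · rw [List.getElem?_append_left (by simp; omega), List.getElem?_take, if_pos hj]
    · rcases lt_or_ge j (2*n) with hj2 | hj2
      · rw [List.getElem?_append_right (by simp; omega)]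
        have hlt : j - n < n := by omega
        have hh := hq ⟨j - n, hlt⟩ (List.mem_finRange _)
        simp only [List.length_take, hlen, min_eq_left (by omega : n ≤ 2*n)]
        rw [List.getElem?_take, if_pos hlt]
        have hjn : n + (j - n) = j := by omega
        rw [hjn] at hh
        exact hh.symm
      · rw [List.getElem?_eq_none (by omega), List.getElem?_eq_none (by simp; omega)]
  · rintro ⟨b, hb, rfl⟩
    refine ⟨by simp [hb]; ring, fun i _ => ?_⟩
    rw [List.getElem?_append_left (by omega), List.getElem?_append_right (by omega)]
    congr 1
    omega
end

section
/- Every match expression of width n is provably equal, using the match expression axioms and Boolean algebra axioms, to a sum (possibly empty, i.e. ⊥) of purely concatenative expressions over atoms {0,1}: e ≡ Σ_{b ∈ ⟦e⟧} ĉ(b), where ĉ(b) is the concatenation of the literal bits of b. Consequently, semantic equality implies provable equality (completeness of the match expression axioms). -/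
/-- Provable equality of match expressions: Boolean algebra axioms at each
width, together with the match expression axioms of Figure 2. -/
inductive MEq : {n : ℕ} → MExp n → MExp n → Prop
  -- equivalence
  | refl {n} (e : MExp n) : MEq e e
  | symm {n} {e f : MExp n} : MEq e f → MEq f e
  | trans {n} {e f g : MExp n} : MEq e f → MEq f g → MEq e g
  -- congruence
  | plusCongr {n} {e e' f f' : MExp n} : MEq e e' → MEq f f' → MEq (.plus e f) (.plus e' f')
  | interCongr {n} {e e' f f' : MExp n} : MEq e e' → MEq f f' → MEq (.inter e f) (.inter e' f')
  | complCongr {n} {e e' : MExp n} : MEq e e' → MEq (.compl e) (.compl e')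
  | catCongr {m k} {e e' : MExp m} {f f' : MExp k} :
      MEq e e' → MEq f f' → MEq (.cat e f) (.cat e' f')
  -- Boolean algebra axioms
  | plusComm {n} (e f : MExp n) : MEq (.plus e f) (.plus f e)
  | plusAssoc {n} (e f g : MExp n) : MEq (.plus (.plus e f) g) (.plus e (.plus f g))
  | interComm {n} (e f : MExp n) : MEq (.inter e f) (.inter f e)
  | interAssoc {n} (e f g : MExp n) : MEq (.inter (.inter e f) g) (.inter e (.inter f g))
  | plusBot {n} (e : MExp n) : MEq (.plus e .bot) e
  | interTop {n} (e : MExp n) : MEq (.inter e (mtop n)) e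
  | plusDistrib {n} (e f g : MExp n) :
      MEq (.plus e (.inter f g)) (.inter (.plus e f) (.plus e g))
  | interDistrib {n} (e f g : MExp n) :
      MEq (.inter e (.plus f g)) (.plus (.inter e f) (.inter e g))
  | complPlus {n} (e : MExp n) : MEq (.plus e (.compl e)) (mtop n)
  | complInter {n} (e : MExp n) : MEq (.inter e (.compl e)) .bot
  -- match expression axioms
  | zeroCompl : MEq (.compl .b0) .b1
  | onePlusZero : MEq (.plus .b1 .b0) .wx
  | zeroPlusOne : MEq (.plus .b0 .b1) .wx
  | oneInterZero : MEq (.inter .b1 .b0) .bot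
  | zeroInterOne : MEq (.inter .b0 .b1) .bot
  | epsCatL {n} (e : MExp n) : MEq (MExp.cast (Nat.zero_add n) (.cat .eps e)) e
  | epsCatR {n} (e : MExp n) : MEq (.cat e .eps) e
  | botCatL {m k} (e : MExp k) : MEq (.cat (.bot : MExp m) e) .bot
  | botCatR {m k} (e : MExp m) : MEq (.cat e (.bot : MExp k)) .bot
  | complCat {m k} (e : MExp m) (f : MExp k) :
      MEq (.compl (.cat e f)) (.plus (.cat (.compl e) (mtop k)) (.cat (mtop m) (.compl f)))
  | catAssoc {a b c} (e : MExp a) (f : MExp b) (g : MExp c) :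
      MEq (MExp.cast (Nat.add_assoc a b c) (.cat (.cat e f) g)) (.cat e (.cat f g))
  | catPlusL {m k} (e : MExp m) (f g : MExp k) :
      MEq (.cat e (.plus f g)) (.plus (.cat e f) (.cat e g))
  | catPlusR {m k} (e f : MExp m) (g : MExp k) :
      MEq (.cat (.plus e f) g) (.plus (.cat e g) (.cat f g))
  | catInterL {m k} (e : MExp m) (f g : MExp k) :
      MEq (.cat e (.inter f g)) (.inter (.cat e f) (.cat e g))
  | catInterR {m k} (e f : MExp m) (g : MExp k) :
      MEq (.cat (.inter e f) g) (.inter (.cat e g) (.cat f g))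

/-- The width-1 expression matching exactly the bit `c`. -/
def bitAtom : Bool → MExp 1
  | false => .b0
  | true => .b1

/-- `ĉ(b)`: the purely concatenative expression made of the literal bits of `b`. -/
def ofString : (b : List Bool) → MExp b.length
  | [] => .eps
  | c :: t => MExp.cast (Nat.add_comm 1 t.length) (.cat (bitAtom c) (ofString t))

/-- `ĉ(b)` coerced to width `n` (it is `⊥` if `b` does not have length `n`,
which never occurs below). -/
def ofStringN (n : ℕ) (b : List Bool) : MExp n :=
  if h : b.length = n then MExp.cast h (ofString b) else .bot

/-- All binary strings of length `n`. -/
def allStrings : ℕ → List (List Bool)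
  | 0 => [[]]
  | n + 1 => (allStrings n).map (false :: ·) ++ (allStrings n).map (true :: ·)

open Classical in
/-- `Σ_{b ∈ ⟦e⟧} ĉ(b)`: the sum (possibly empty, i.e. `⊥`) of the purely
concatenative expressions of the strings matched by `e`. -/
noncomputable def normalForm {n : ℕ} (e : MExp n) : MExp n :=
  ((allStrings n).filter fun b => decide (b ∈ msem e)).foldr
    (fun b acc => .plus (ofStringN n b) acc) .bot

/-!
The classes of width-`n` expressions modulo provable equality form a Boolean algebra
`MAlg n`, and concatenation descends to these quotients. For strings `b` of length `n`
the classes of `ĉ(b)` are pairwise disjoint (two such strings differ in some bit, and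
`1 ⊓ 0 = ⊥` propagates through concatenation) and their join is `⊤ₙ` (unfold
`⊤ₙ₊₁ = ⊤ₙ(0 + 1)` and distribute). So `s ↦ Σ_{b ∈ s} ĉ(b)` commutes with `∪`, `∩`,
complement relative to `{0,1}ⁿ` and concatenation, and induction on `e` shows that the
class of `e` is that of `Σ_{b ∈ ⟦e⟧} ĉ(b)`.
-/

instance MExp.setoid (n : ℕ) : Setoid (MExp n) := ⟨MEq, ⟨MEq.refl, MEq.symm, MEq.trans⟩⟩

abbrev MAlg (n : ℕ) := Quotient (MExp.setoid n)

namespace MAlg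

variable {m n k : ℕ}

def mk (e : MExp n) : MAlg n := Quotient.mk _ e

theorem mk_eq_mk {e f : MExp n} : mk e = mk f ↔ MEq e f := Quotient.eq

instance : Max (MAlg n) := ⟨Quotient.map₂ .plus fun _ _ h _ _ h' => MEq.plusCongr h h'⟩
instance : Min (MAlg n) := ⟨Quotient.map₂ .inter fun _ _ h _ _ h' => MEq.interCongr h h'⟩
instance : Compl (MAlg n) := ⟨Quotient.map .compl fun _ _ h => MEq.complCongr h⟩
instance : Bot (MAlg n) := ⟨mk .bot⟩
instance : Top (MAlg n) := ⟨mk (mtop n)⟩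

def cat : MAlg m → MAlg k → MAlg (m + k) :=
  Quotient.map₂ .cat fun _ _ h _ _ h' => MEq.catCongr h h'

protected def cast (h : m = n) (x : MAlg m) : MAlg n := h ▸ x

@[simp] theorem mk_plus (e f : MExp n) : mk (.plus e f) = mk e ⊔ mk f := rfl
@[simp] theorem mk_inter (e f : MExp n) : mk (.inter e f) = mk e ⊓ mk f := rfl
@[simp] theorem mk_compl (e : MExp n) : mk (.compl e) = (mk e)ᶜ := rfl
@[simp] theorem mk_cat (e : MExp m) (f : MExp k) : mk (.cat e f) = cat (mk e) (mk f) := rfl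
@[simp] theorem mk_cast (h : m = n) (e : MExp m) : mk (e.cast h) = (mk e).cast h := by
  subst h; rfl

theorem cast_cast {p : ℕ} (h : m = n) (h' : n = p) (x : MAlg m) :
    (x.cast h).cast h' = x.cast (h.trans h') := by
  subst h h'; rfl

theorem cast_eq_iff (h : m = n) (x : MAlg m) (y : MAlg n) : x.cast h = y ↔ x = y.cast h.symm := by
  subst h; rfl

theorem cast_cat_left {m'} (h : m = m') (x : MAlg m) (y : MAlg k) :
    cat (x.cast h) y = (cat x y).cast (by rw [h]) := by
  subst h; rfl

protected theorem sup_comm (a b : MAlg n) : a ⊔ b = b ⊔ a :=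
  Quotient.inductionOn₂ a b fun e f => Quotient.sound (MEq.plusComm e f)
protected theorem sup_assoc (a b c : MAlg n) : a ⊔ b ⊔ c = a ⊔ (b ⊔ c) :=
  Quotient.inductionOn₃ a b c fun e f g => Quotient.sound (MEq.plusAssoc e f g)
protected theorem inf_comm (a b : MAlg n) : a ⊓ b = b ⊓ a :=
  Quotient.inductionOn₂ a b fun e f => Quotient.sound (MEq.interComm e f)
protected theorem inf_assoc (a b c : MAlg n) : a ⊓ b ⊓ c = a ⊓ (b ⊓ c) :=
  Quotient.inductionOn₃ a b c fun e f g => Quotient.sound (MEq.interAssoc e f g)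
protected theorem sup_bot (a : MAlg n) : a ⊔ ⊥ = a :=
  Quotient.inductionOn a fun e => Quotient.sound (MEq.plusBot e)
protected theorem inf_top (a : MAlg n) : a ⊓ ⊤ = a :=
  Quotient.inductionOn a fun e => Quotient.sound (MEq.interTop e)
protected theorem sup_inf_left (a b c : MAlg n) : a ⊔ b ⊓ c = (a ⊔ b) ⊓ (a ⊔ c) :=
  Quotient.inductionOn₃ a b c fun e f g => Quotient.sound (MEq.plusDistrib e f g)
protected theorem inf_sup_left (a b c : MAlg n) : a ⊓ (b ⊔ c) = a ⊓ b ⊔ a ⊓ c :=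
  Quotient.inductionOn₃ a b c fun e f g => Quotient.sound (MEq.interDistrib e f g)
protected theorem sup_compl (a : MAlg n) : a ⊔ aᶜ = ⊤ :=
  Quotient.inductionOn a fun e => Quotient.sound (MEq.complPlus e)
protected theorem inf_compl (a : MAlg n) : a ⊓ aᶜ = ⊥ :=
  Quotient.inductionOn a fun e => Quotient.sound (MEq.complInter e)

protected theorem sup_top (a : MAlg n) : a ⊔ ⊤ = ⊤ := calc
  a ⊔ ⊤ = (a ⊔ ⊤) ⊓ (a ⊔ aᶜ) := by rw [MAlg.sup_compl, MAlg.inf_top]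
  _ = a ⊔ aᶜ := by rw [← MAlg.sup_inf_left, MAlg.inf_comm, MAlg.inf_top]
  _ = ⊤ := MAlg.sup_compl a

protected theorem inf_bot (a : MAlg n) : a ⊓ ⊥ = ⊥ := calc
  a ⊓ ⊥ = a ⊓ ⊥ ⊔ a ⊓ aᶜ := by rw [MAlg.inf_compl, MAlg.sup_bot]
  _ = a ⊓ aᶜ := by rw [← MAlg.inf_sup_left, MAlg.sup_comm, MAlg.sup_bot]
  _ = ⊥ := MAlg.inf_compl a

protected theorem sup_inf_self (a b : MAlg n) : a ⊔ a ⊓ b = a := calc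
  a ⊔ a ⊓ b = a ⊓ (⊤ ⊔ b) := by rw [MAlg.inf_sup_left, MAlg.inf_top]
  _ = a := by rw [MAlg.sup_comm, MAlg.sup_top, MAlg.inf_top]

protected theorem inf_sup_self (a b : MAlg n) : a ⊓ (a ⊔ b) = a := calc
  a ⊓ (a ⊔ b) = a ⊔ ⊥ ⊓ b := by rw [MAlg.sup_inf_left, MAlg.sup_bot]
  _ = a := by rw [MAlg.inf_comm, MAlg.inf_bot, MAlg.sup_bot]

instance : Lattice (MAlg n) :=
  Lattice.mk' MAlg.sup_comm MAlg.sup_assoc MAlg.inf_comm MAlg.inf_assoc MAlg.sup_inf_self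
    MAlg.inf_sup_self

instance : BooleanAlgebra (MAlg n) where
  le_sup_inf x y z := (MAlg.sup_inf_left x y z).ge
  inf_compl_le_bot x := (MAlg.inf_compl x).le
  top_le_sup_compl x := (MAlg.sup_compl x).ge
  le_top a := sup_eq_right.mp (MAlg.sup_top a)
  bot_le a := sup_eq_right.mp ((MAlg.sup_comm _ _).trans (MAlg.sup_bot a))
  sdiff a b := a ⊓ bᶜ
  himp a b := b ⊔ aᶜ
  sdiff_eq _ _ := rfl
  himp_eq _ _ := rfl

theorem disjoint_cast_iff (h : m = n) (x y : MAlg m) :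
    Disjoint (x.cast h) (y.cast h) ↔ Disjoint x y := by
  subst h; rfl

theorem eps_cat (y : MAlg n) : (cat (mk .eps) y).cast (Nat.zero_add n) = y :=
  Quotient.inductionOn y fun e => (mk_cast _ _).symm.trans (Quotient.sound (MEq.epsCatL e))

theorem cat_eps (x : MAlg n) : cat x (mk .eps) = x :=
  Quotient.inductionOn x fun e => Quotient.sound (MEq.epsCatR e)

theorem bot_cat (y : MAlg k) : cat (⊥ : MAlg m) y = ⊥ :=
  Quotient.inductionOn y fun e => Quotient.sound (MEq.botCatL e)

theorem cat_bot (x : MAlg m) : cat x (⊥ : MAlg k) = ⊥ :=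
  Quotient.inductionOn x fun e => Quotient.sound (MEq.botCatR e)

theorem cat_assoc {p : ℕ} (x : MAlg m) (y : MAlg k) (z : MAlg p) :
    (cat (cat x y) z).cast (Nat.add_assoc m k p) = cat x (cat y z) :=
  Quotient.inductionOn₃ x y z fun e f g =>
    (mk_cast _ _).symm.trans (Quotient.sound (MEq.catAssoc e f g))

theorem cat_sup (x : MAlg m) (y z : MAlg k) : cat x (y ⊔ z) = cat x y ⊔ cat x z :=
  Quotient.inductionOn₃ x y z fun e f g => Quotient.sound (MEq.catPlusL e f g)

theorem sup_cat (x y : MAlg m) (z : MAlg k) : cat (x ⊔ y) z = cat x z ⊔ cat y z :=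
  Quotient.inductionOn₃ x y z fun e f g => Quotient.sound (MEq.catPlusR e f g)

theorem cat_inf (x : MAlg m) (y z : MAlg k) : cat x (y ⊓ z) = cat x y ⊓ cat x z :=
  Quotient.inductionOn₃ x y z fun e f g => Quotient.sound (MEq.catInterL e f g)

theorem inf_cat (x y : MAlg m) (z : MAlg k) : cat (x ⊓ y) z = cat x z ⊓ cat y z :=
  Quotient.inductionOn₃ x y z fun e f g => Quotient.sound (MEq.catInterR e f g)

theorem cat_mono_right (x : MAlg m) {y y' : MAlg k} (h : y ≤ y') : cat x y ≤ cat x y' :=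
  sup_eq_right.mp (by rw [← cat_sup, sup_eq_right.mpr h])

theorem disjoint_cat_of_disjoint_left {x x' : MAlg m} (h : Disjoint x x') (y y' : MAlg k) :
    Disjoint (cat x y) (cat x' y') := by
  have htop : Disjoint (cat x (⊤ : MAlg k)) (cat x' ⊤) := by
    rw [disjoint_iff, ← inf_cat, h.eq_bot, bot_cat]
  exact htop.mono (cat_mono_right x le_top) (cat_mono_right x' le_top)

theorem cat_finset_sup {ι : Type*} [DecidableEq ι] (x : MAlg m) (s : Finset ι)
    (f : ι → MAlg k) : cat x (s.sup f) = s.sup fun i => cat x (f i) := by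
  induction s using Finset.induction with
  | empty => exact cat_bot x
  | insert _ _ _ ih => rw [Finset.sup_insert, cat_sup, ih, Finset.sup_insert]

theorem finset_sup_cat {ι : Type*} [DecidableEq ι] (s : Finset ι) (f : ι → MAlg m)
    (y : MAlg k) : cat (s.sup f) y = s.sup fun i => cat (f i) y := by
  induction s using Finset.induction with
  | empty => exact bot_cat y
  | insert _ _ _ ih => rw [Finset.sup_insert, sup_cat, ih, Finset.sup_insert]

def bit (c : Bool) : MAlg 1 := mk (bitAtom c)

def atom (n : ℕ) (b : List Bool) : MAlg n := mk (ofStringN n b)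

theorem disjoint_bit {c c' : Bool} (h : c ≠ c') : Disjoint (bit c) (bit c') := by
  rw [disjoint_iff]
  cases c <;> cases c' <;> simp only [ne_eq, not_true_eq_false] at h
  · exact Quotient.sound MEq.zeroInterOne
  · exact Quotient.sound MEq.oneInterZero

theorem bit_false_sup_bit_true : bit false ⊔ bit true = mk .wx :=
  Quotient.sound MEq.zeroPlusOne

theorem atom_nil : atom 0 [] = mk .eps := rfl

theorem atom_of_length_eq {b : List Bool} (hb : b.length = n) :
    atom n b = (mk (ofString b)).cast hb := by
  subst hb
  simp [atom, ofStringN]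

theorem atom_cons (c : Bool) {t : List Bool} (ht : t.length = n) :
    atom (n + 1) (c :: t) = (cat (bit c) (atom n t)).cast (Nat.add_comm 1 n) := by
  subst ht
  rw [atom_of_length_eq (b := c :: t) (n := t.length + 1) rfl, atom_of_length_eq (b := t) rfl]
  simp only [ofString, mk_cast, mk_cat]
  rfl

theorem atom_singleton (c : Bool) : atom 1 [c] = bit c := by
  rw [atom_cons (n := 0) c rfl, atom_nil, cat_eps]
  rfl

theorem cast_atom (h : m = n) (b : List Bool) : (atom m b).cast h = atom n b := by
  subst h; rfl

theorem cat_atom {b b' : List Bool} (hb : b.length = m) (hb' : b'.length = k) :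
    cat (atom m b) (atom k b') = atom (m + k) (b ++ b') := by
  subst hb hb'
  induction b with
  | nil =>
    simp only [List.length_nil, List.nil_append]
    rw [atom_nil, ← cast_atom (Nat.zero_add _).symm, eq_comm, cast_eq_iff]
    exact (eps_cat _).symm
  | cons c t ih =>
    simp only [List.length_cons, List.cons_append]
    rw [atom_cons c rfl, cast_cat_left, ← cast_atom (Nat.add_right_comm _ _ 1),
      atom_cons c (List.length_append ..), ← ih, ← cat_assoc,
      cast_cast, cast_cast]

theorem disjoint_atom : ∀ {n : ℕ} {b b' : List Bool}, b.length = n → b'.length = n → b ≠ b' →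
    Disjoint (atom n b) (atom n b')
  | 0, [], [], _, _, hne => absurd rfl hne
  | n + 1, c :: t, c' :: t', hb, hb', hne => by
    have ht : t.length = n := Nat.succ.inj hb
    have ht' : t'.length = n := Nat.succ.inj hb'
    rw [atom_cons c ht, atom_cons c' ht', disjoint_cast_iff]
    obtain rfl | hc := eq_or_ne c c'
    · have htt : t ≠ t' := fun h => hne (h ▸ rfl)
      rw [disjoint_iff, ← cat_inf, (disjoint_atom ht ht' htt).eq_bot, cat_bot]
    · exact disjoint_cat_of_disjoint_left (disjoint_bit hc) _ _

end MAlg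

theorem mem_allStrings {n : ℕ} {b : List Bool} : b ∈ allStrings n ↔ b.length = n := by
  induction n generalizing b with
  | zero => simp [allStrings, List.length_eq_zero_iff]
  | succ n ih =>
    cases b with
    | nil => simp [allStrings]
    | cons c t => cases c <;> simp [allStrings, ih]

def strings (n : ℕ) : Finset (List Bool) := (allStrings n).toFinset

theorem mem_strings {n : ℕ} {b : List Bool} : b ∈ strings n ↔ b.length = n := by
  simp [strings, mem_allStrings]

theorem strings_zero : strings 0 = {[]} := by decide

theorem strings_one : strings 1 = {[false], [true]} := by decide

theorem image₂_append_strings (m k : ℕ) :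
    Finset.image₂ (· ++ ·) (strings m) (strings k) = strings (m + k) := by
  ext w
  simp only [Finset.mem_image₂, mem_strings]
  constructor
  · rintro ⟨x, rfl, y, rfl, rfl⟩
    exact List.length_append ..
  · intro hw
    exact ⟨w.take m, by simp [hw], w.drop m, by simp [hw], List.take_append_drop m w⟩

theorem length_of_mem_msem {n : ℕ} {e : MExp n} {w : List Bool} (hw : w ∈ msem e) :
    w.length = n := by
  induction e generalizing w with
  | eps | b0 | b1 => simp_all [msem]
  | bot => simp [msem] at hw
  | wx => rcases hw with rfl | rfl <;> rfl
  | cat e f ihe ihf =>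
    obtain ⟨x, hx, y, hy, rfl⟩ := hw
    rw [List.length_append, ihe hx, ihf hy]
  | plus e f ihe ihf => exact hw.elim ihe ihf
  | inter e f ihe _ => exact ihe hw.1
  | compl e _ => exact hw.1

theorem msem_cat {m k : ℕ} (e : MExp m) (f : MExp k) :
    msem (.cat e f) = Set.image2 (· ++ ·) (msem e) (msem f) := by
  ext w
  simp [msem, Set.mem_image2, eq_comm]

namespace MAlg

variable {m n k : ℕ}

theorem cat_sup_atom {s : Finset (List Bool)} {t : Finset (List Bool)}
    (hs : ∀ x ∈ s, x.length = m) (ht : ∀ y ∈ t, y.length = k) :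
    cat (s.sup (atom m)) (t.sup (atom k)) = (Finset.image₂ (· ++ ·) s t).sup (atom (m + k)) := by
  rw [finset_sup_cat, Finset.sup_image₂_left]
  refine Finset.sup_congr rfl fun x hx => ?_
  rw [cat_finset_sup]
  exact Finset.sup_congr rfl fun y hy => cat_atom (hs x hx) (ht y hy)

theorem top_eq_sup_atom : ∀ n, (⊤ : MAlg n) = (strings n).sup (atom n)
  | 0 => by rw [strings_zero, Finset.sup_singleton, atom_nil]; rfl
  | n + 1 => by
    have hwx : mk .wx = (strings 1).sup (atom 1) := by
      rw [strings_one, Finset.sup_insert, Finset.sup_singleton, atom_singleton, atom_singleton,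
        bit_false_sup_bit_true]
    change cat ⊤ (mk .wx) = _
    rw [top_eq_sup_atom n, hwx, cat_sup_atom (fun _ => mem_strings.1) (fun _ => mem_strings.1),
      image₂_append_strings]

section SumAtoms

open Classical

noncomputable def sumAtoms (n : ℕ) (s : Set (List Bool)) : MAlg n :=
  ((strings n).filter (· ∈ s)).sup (atom n)

theorem sumAtoms_congr {s t : Set (List Bool)} (h : ∀ w, w.length = n → (w ∈ s ↔ w ∈ t)) :
    sumAtoms n s = sumAtoms n t := by
  rw [sumAtoms, sumAtoms, Finset.filter_congr fun w hw => h w (mem_strings.1 hw)]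

theorem sumAtoms_empty : sumAtoms n ∅ = ⊥ := by
  simp [sumAtoms]

theorem sumAtoms_univ : sumAtoms n Set.univ = ⊤ := by
  simp [sumAtoms, top_eq_sup_atom]

theorem sumAtoms_singleton {b : List Bool} (hb : b.length = n) : sumAtoms n {b} = atom n b := by
  simp [sumAtoms, Finset.filter_eq', mem_strings, hb]

theorem sumAtoms_union (s t : Set (List Bool)) :
    sumAtoms n (s ∪ t) = sumAtoms n s ⊔ sumAtoms n t := by
  simp only [sumAtoms, ← Finset.sup_union, ← Finset.filter_or, Set.mem_union]

theorem sumAtoms_mono {s t : Set (List Bool)} (h : s ⊆ t) : sumAtoms n s ≤ sumAtoms n t :=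
  Finset.sup_mono (Finset.monotone_filter_right _ fun _ _ hw => h hw)

theorem sumAtoms_inter (s t : Set (List Bool)) :
    sumAtoms n s ⊓ sumAtoms n t = sumAtoms n (s ∩ t) := by
  refine le_antisymm ?_ (le_inf (sumAtoms_mono s.inter_subset_left)
    (sumAtoms_mono s.inter_subset_right))
  rw [sumAtoms, sumAtoms, Finset.sup_inf_sup]
  refine Finset.sup_le fun ⟨b, b'⟩ hbb' => ?_
  simp only [Finset.mem_product, Finset.mem_filter, mem_strings] at hbb'
  obtain ⟨⟨hb, hbs⟩, hb', hbt⟩ := hbb'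
  obtain rfl | hne := eq_or_ne b b'
  · rw [inf_idem]
    exact Finset.le_sup (by simp [mem_strings, hb, hbs, hbt])
  · rw [(disjoint_atom hb hb' hne).eq_bot]
    exact bot_le

theorem sumAtoms_compl (s : Set (List Bool)) :
    (sumAtoms n s)ᶜ = sumAtoms n ({w | w.length = n} \ s) := by
  refine compl_unique ?_ ?_
  · rw [sumAtoms_inter, ← sumAtoms_empty]
    exact sumAtoms_congr fun w _ => by simp
  · rw [← sumAtoms_union, ← sumAtoms_univ]
    exact sumAtoms_congr fun w hw => by by_cases w ∈ s <;> simp [*]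

theorem cat_sumAtoms {s t : Set (List Bool)} (hs : ∀ x ∈ s, x.length = m)
    (ht : ∀ y ∈ t, y.length = k) :
    cat (sumAtoms m s) (sumAtoms k t) = sumAtoms (m + k) (Set.image2 (· ++ ·) s t) := by
  rw [sumAtoms, sumAtoms, sumAtoms, cat_sup_atom (by simp +contextual [mem_strings])
    (by simp +contextual [mem_strings])]
  congr 1
  ext w
  simp only [Finset.mem_image₂, Finset.mem_filter, mem_strings, Set.mem_image2]
  constructor
  · rintro ⟨x, ⟨hxm, hx⟩, y, ⟨hyk, hy⟩, rfl⟩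
    exact ⟨by rw [List.length_append, hxm, hyk], x, hx, y, hy, rfl⟩
  · rintro ⟨-, x, hx, y, hy, rfl⟩
    exact ⟨x, ⟨hs x hx, hx⟩, y, ⟨ht y hy, hy⟩, rfl⟩

theorem mk_eq_sumAtoms (e : MExp n) : mk e = sumAtoms n (msem e) := by
  induction e with
  | eps => exact (sumAtoms_singleton (n := 0) (b := []) rfl).symm
  | bot => exact sumAtoms_empty.symm
  | b0 => exact ((sumAtoms_singleton (n := 1) rfl).trans (atom_singleton false)).symm
  | b1 => exact ((sumAtoms_singleton (n := 1) rfl).trans (atom_singleton true)).symm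
  | wx =>
    rw [msem, Set.insert_eq, sumAtoms_union, sumAtoms_singleton (n := 1) (b := [false]) rfl,
      sumAtoms_singleton (n := 1) (b := [true]) rfl,
      atom_singleton, atom_singleton, bit_false_sup_bit_true]
  | cat e f ihe ihf =>
    rw [mk_cat, ihe, ihf, msem_cat,
      cat_sumAtoms (fun _ => length_of_mem_msem) (fun _ => length_of_mem_msem)]
  | plus e f ihe ihf => rw [mk_plus, ihe, ihf, ← sumAtoms_union]; rfl
  | inter e f ihe ihf => rw [mk_inter, ihe, ihf, sumAtoms_inter]; rfl
  | compl e ih => rw [mk_compl, ih, sumAtoms_compl]; rfl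

theorem mk_foldr_plus (l : List (List Bool)) :
    mk (l.foldr (fun b acc => .plus (ofStringN n b) acc) .bot) = l.toFinset.sup (atom n) := by
  induction l with
  | nil => rfl
  | cons b l ih => rw [List.foldr_cons, mk_plus, ih, List.toFinset_cons, Finset.sup_insert]; rfl

theorem mk_normalForm (e : MExp n) : mk (normalForm e) = sumAtoms n (msem e) := by
  rw [normalForm, mk_foldr_plus, List.toFinset_filter, sumAtoms, strings]
  simp

end SumAtoms

end MAlg

/-- Every match expression is provably equal to the sum of the literal
concatenative expressions of the strings it matches; consequently semantic
equality implies provable equality (completeness). -/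
theorem matchExp_complete :
    (∀ {n : ℕ} (e : MExp n), MEq e (normalForm e)) ∧
    (∀ {n : ℕ} (e e' : MExp n), msem e = msem e' → MEq e e') := by
  refine ⟨fun e => MAlg.mk_eq_mk.1 ?_, fun e e' h => MAlg.mk_eq_mk.1 ?_⟩
  · rw [MAlg.mk_eq_sumAtoms, MAlg.mk_normalForm]
  · rw [MAlg.mk_eq_sumAtoms, MAlg.mk_eq_sumAtoms, h]
end
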